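/- Let K ⊆ H be standard subspaces and T := S_K* S_H (with natural domain {v ∈ Dom S_H : S_H v ∈ Dom S_K*}). Then T extends Δ_H, and for any λ ∈ ℂ with |λ| = 1, the eigenspace ker(T − λ) equals ℂ[(λ^{-1/2}K)′ ∩ H]. In particular Fix(T) = ℂ[K′ ∩ H] and Fix(−T) = ℂ[K^{⊥_ℝ} ∩ H]. -/

import Mathlib

open Complex Submodule Filter Topology

variable {E : Type*} [NormedAddCommGroup E] [InnerProductSpace ℂ E]

/-- Multiplication by `i` as a real-linear map. -/
noncomputable def mulI (E : Type*) [NormedAddCommGroup E] [InnerProductSpace ℂ E] :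
    E →ₗ[ℝ] E where
  toFun x := (Complex.I : ℂ) • x
  map_add' := fun x y => smul_add Complex.I x y
  map_smul' := fun r x => smul_comm Complex.I r x

/-- `H + iH` as a real submodule. -/
noncomputable def cspan (H : Submodule ℝ E) : Submodule ℝ E := H ⊔ H.map (mulI E)

/-- The symplectic complement `K' = {v : Im ⟨v, k⟩ = 0 ∀ k ∈ K}`. -/
noncomputable def sympl (K : Submodule ℝ E) : Submodule ℝ E where
  carrier := {v : E | ∀ k ∈ K, (inner ℂ v k : ℂ).im = 0}
  add_mem' := by
    intro a b ha hb k hk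
    simp only [Set.mem_setOf_eq] at *
    rw [inner_add_left, Complex.add_im, ha k hk, hb k hk, add_zero]
  zero_mem' := by intro k hk; simp
  smul_mem' := by
    intro c v hv k hk
    simp only [Set.mem_setOf_eq] at *
    have h : (c • v : E) = ((c : ℂ)) • v := by
      simp [Complex.coe_smul]
    rw [h, inner_smul_left]
    simp [hv k hk]

/-- The real-orthogonal complement `{v : Re ⟨v, k⟩ = 0 ∀ k ∈ K}`. -/
noncomputable def realPerp (K : Submodule ℝ E) : Submodule ℝ E where
  carrier := {v : E | ∀ k ∈ K, (inner ℂ v k : ℂ).re = 0}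
  add_mem' := by
    intro a b ha hb k hk
    simp only [Set.mem_setOf_eq] at *
    rw [inner_add_left, Complex.add_re, ha k hk, hb k hk, add_zero]
  zero_mem' := by intro k hk; simp
  smul_mem' := by
    intro c v hv k hk
    simp only [Set.mem_setOf_eq] at *
    have h : (c • v : E) = ((c : ℂ)) • v := by
      simp [Complex.coe_smul]
    rw [h, inner_smul_left]
    simp [hv k hk]

/-- A standard subspace: closed, cyclic and separating real subspace. -/
structure IsStandardSubspace (H : Submodule ℝ E) : Prop where
  isClosed : IsClosed (H : Set E)
  cyclic : Dense ((cspan H : Submodule ℝ E) : Set E)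
  separating : H ⊓ H.map (mulI E) = ⊥

/-- Scalar multiplication by a complex number as a real-linear map. -/
noncomputable def smulC (E : Type*) [NormedAddCommGroup E] [InnerProductSpace ℂ E]
    (mu : ℂ) : E →ₗ[ℝ] E where
  toFun x := mu • x
  map_add' := fun x y => smul_add mu x y
  map_smul' := fun r x => smul_comm mu r x

/-!
Write `L = K'`. For `|μ| = 1` the map `μ² S_L` is a Tomita operator of `μL = (μK)'`, so with
`λ = μ⁻²` the eigen-equation `T v = λ v` reads `S_{(μK)'} S_H v = v`. For a fixed point
`v = h₁ + i h₂` of `S_L S_H` with `S_H v = h₁ - i h₂ = k₁ + i k₂` and `k₁ - i k₂ = v`, adding and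
subtracting the two equations gives `h₁ = k₁` and `h₂ = -k₂`, so `h₁, h₂ ∈ L ∩ H`.
-/

/-- `f` acts on `W + iW` as the Tomita operator `a + i b ↦ a - i b` of `W`. -/
def IsTomitaOp (W : Submodule ℝ E) (f : E → E) : Prop :=
  ∀ a ∈ W, ∀ b ∈ W, f (a + Complex.I • b) = a - Complex.I • b

lemma mem_cspan_iff {W : Submodule ℝ E} {v : E} :
    v ∈ cspan W ↔ ∃ a ∈ W, ∃ b ∈ W, v = a + Complex.I • b := by
  constructor
  · intro h
    obtain ⟨a, ha, _, ⟨b, hb, rfl⟩, hv⟩ := Submodule.mem_sup.1 h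
    exact ⟨a, ha, b, hb, hv.symm⟩
  · rintro ⟨a, ha, b, hb, rfl⟩
    exact Submodule.add_mem _ (Submodule.mem_sup_left ha) (Submodule.mem_sup_right ⟨b, hb, rfl⟩)

lemma cspan_mono {W W' : Submodule ℝ E} (h : W ≤ W') : cspan W ≤ cspan W' :=
  sup_le_sup h (Submodule.map_mono h)

lemma smul_add_I_smul (c : ℂ) (a b : E) :
    c • (a + Complex.I • b) = (c.re • a - c.im • b) + Complex.I • (c.im • a + c.re • b) := by
  simp only [← Complex.coe_smul]
  conv_lhs => rw [← Complex.re_add_im c]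
  match_scalars
  · ring
  · linear_combination (c.im : ℂ) * Complex.I_sq

lemma smul_mem_cspan {W : Submodule ℝ E} (c : ℂ) {x : E} (hx : x ∈ cspan W) :
    c • x ∈ cspan W := by
  obtain ⟨a, ha, b, hb, rfl⟩ := mem_cspan_iff.1 hx
  exact mem_cspan_iff.2 ⟨_, W.sub_mem (W.smul_mem _ ha) (W.smul_mem _ hb),
    _, W.add_mem (W.smul_mem _ ha) (W.smul_mem _ hb), smul_add_I_smul c a b⟩

lemma cspan_map_smulC (W : Submodule ℝ E) {μ : ℂ} (hμ : μ ≠ 0) :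
    cspan (W.map (smulC E μ)) = cspan W := by
  ext x
  constructor
  · intro hx
    obtain ⟨_, ⟨a, ha, rfl⟩, _, ⟨b, hb, rfl⟩, rfl⟩ := mem_cspan_iff.1 hx
    have hab := smul_mem_cspan μ (mem_cspan_iff.2 ⟨a, ha, b, hb, rfl⟩)
    rwa [smul_add, smul_comm μ Complex.I] at hab
  · intro hx
    obtain ⟨a, ha, b, hb, hab⟩ := mem_cspan_iff.1 (smul_mem_cspan μ⁻¹ hx)
    refine mem_cspan_iff.2 ⟨μ • a, ⟨a, ha, rfl⟩, μ • b, ⟨b, hb, rfl⟩, ?_⟩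
    rw [smul_comm Complex.I μ, ← smul_add, ← hab, smul_inv_smul₀ hμ]

lemma sympl_anti {W W' : Submodule ℝ E} (h : W ≤ W') : sympl W' ≤ sympl W :=
  fun _ hv k hk => hv k (h hk)

lemma conj_mul_self_of_norm_eq_one {μ : ℂ} (hμ : ‖μ‖ = 1) : starRingEnd ℂ μ * μ = 1 := by
  rw [Complex.conj_mul', hμ]; norm_num

lemma sympl_map_smulC (K : Submodule ℝ E) {μ : ℂ} (hμ : ‖μ‖ = 1) :
    sympl (K.map (smulC E μ)) = (sympl K).map (smulC E μ) := by
  have mem_iff (x : E) : x ∈ sympl (K.map (smulC E μ)) ↔ starRingEnd ℂ μ • x ∈ sympl K := by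
    refine ⟨fun h k hk => ?_, fun h _ ⟨k, hk, hkμ⟩ => ?_⟩
    · have := h (μ • k) ⟨k, hk, rfl⟩
      simp only [inner_smul_left, inner_smul_right, Complex.mul_im, Complex.conj_re,
        Complex.conj_im] at this ⊢
      linarith
    · subst hkμ
      have := h k hk
      simp only [smulC, LinearMap.coe_mk, AddHom.coe_mk, inner_smul_left, inner_smul_right,
        Complex.mul_im, Complex.conj_re, Complex.conj_im] at this ⊢
      linarith
  ext x
  rw [mem_iff]
  constructor
  · exact fun h => ⟨_, h, by simp [smulC, smul_smul, mul_comm μ, conj_mul_self_of_norm_eq_one hμ]⟩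
  · rintro ⟨y, hy, rfl⟩
    simpa [smulC, smul_smul, conj_mul_self_of_norm_eq_one hμ] using hy

lemma sympl_map_smulC_I (K : Submodule ℝ E) :
    sympl (K.map (smulC E Complex.I)) = realPerp K := by
  ext v
  constructor
  · intro h k hk
    simpa [inner_smul_right] using h (Complex.I • k) ⟨k, hk, rfl⟩
  · rintro h _ ⟨k, hk, rfl⟩
    simpa [smulC, inner_smul_right] using h k hk

namespace IsTomitaOp

variable {W W' : Submodule ℝ E} {f g : E → E}

lemma mono (h : W ≤ W') (hf : IsTomitaOp W' f) : IsTomitaOp W f :=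
  fun a ha b hb => hf a (h ha) b (h hb)

lemma eq_of_mem_cspan (hf : IsTomitaOp W f) (hg : IsTomitaOp W g) {x : E} (hx : x ∈ cspan W) :
    f x = g x := by
  obtain ⟨a, ha, b, hb, rfl⟩ := mem_cspan_iff.1 hx
  rw [hf a ha b hb, hg a ha b hb]

lemma apply_smul (hf : IsTomitaOp W f) (c : ℂ) {a b : E} (ha : a ∈ W) (hb : b ∈ W) :
    f (c • (a + Complex.I • b)) = starRingEnd ℂ c • (a - Complex.I • b) := by
  rw [smul_add_I_smul, hf _ (W.sub_mem (W.smul_mem _ ha) (W.smul_mem _ hb))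
    _ (W.add_mem (W.smul_mem _ ha) (W.smul_mem _ hb)), sub_eq_add_neg a, ← smul_neg,
    smul_add_I_smul, Complex.conj_re, Complex.conj_im]
  module

lemma rotate (hf : IsTomitaOp W f) {μ : ℂ} (hμ : ‖μ‖ = 1) :
    IsTomitaOp (W.map (smulC E μ)) (fun x => μ ^ 2 • f x) := by
  rintro _ ⟨a, ha, rfl⟩ _ ⟨b, hb, rfl⟩
  have hμμ : μ ^ 2 * starRingEnd ℂ μ = μ := by
    rw [sq, mul_assoc, mul_comm μ (starRingEnd ℂ μ), conj_mul_self_of_norm_eq_one hμ, mul_one]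
  simp only [smulC, LinearMap.coe_mk, AddHom.coe_mk]
  rw [smul_comm Complex.I μ, ← smul_add, hf.apply_smul μ ha hb, smul_smul, hμμ, smul_sub,
    smul_comm μ Complex.I]

end IsTomitaOp

lemma setOf_tomita_comp_fixed {H L : Submodule ℝ E} {S SL : E → E}
    (hS : IsTomitaOp H S) (hL : IsTomitaOp L SL) :
    {v : E | (v ∈ cspan H ∧ S v ∈ cspan L) ∧ SL (S v) = v} = (cspan (L ⊓ H) : Set E) := by
  ext v
  constructor
  · rintro ⟨⟨hv, hSv⟩, hfix⟩
    obtain ⟨h₁, hh₁, h₂, hh₂, rfl⟩ := mem_cspan_iff.1 hv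
    obtain ⟨k₁, hk₁, k₂, hk₂, hk⟩ := mem_cspan_iff.1 hSv
    have e₁ : k₁ + Complex.I • k₂ = h₁ - Complex.I • h₂ := hk.symm.trans (hS h₁ hh₁ h₂ hh₂)
    have e₂ : k₁ - Complex.I • k₂ = h₁ + Complex.I • h₂ := by rw [← hL k₁ hk₁ k₂ hk₂, ← hk, hfix]
    have hk₁h₁ : k₁ = h₁ := by linear_combination (norm := module) (1 / 2 : ℂ) • (e₁ + e₂)
    have hk₂h₂ : -k₂ = h₂ := by
      apply smul_right_injective E Complex.I_ne_zero
      linear_combination (norm := module) -(1 / 2 : ℂ) • (e₁ - e₂)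
    subst hk₁h₁ hk₂h₂
    exact mem_cspan_iff.2 ⟨k₁, ⟨hk₁, hh₁⟩, -k₂, ⟨L.neg_mem hk₂, hh₂⟩, rfl⟩
  · intro hv
    obtain ⟨a, ⟨haL, haH⟩, b, ⟨hbL, hbH⟩, rfl⟩ := mem_cspan_iff.1 hv
    have hSv : S (a + Complex.I • b) = a + Complex.I • -b := by
      rw [hS a haH b hbH, smul_neg, sub_eq_add_neg]
    refine ⟨⟨mem_cspan_iff.2 ⟨a, haH, b, hbH, rfl⟩,
      hSv ▸ mem_cspan_iff.2 ⟨a, haL, -b, L.neg_mem hbL, rfl⟩⟩, ?_⟩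
    rw [hSv, hL a haL _ (L.neg_mem hbL), smul_neg, sub_neg_eq_add]

lemma norm_eq_one_of_sq_eq_inv {lam μ : ℂ} (hlam : ‖lam‖ = 1) (hμ : μ ^ 2 = lam⁻¹) :
    ‖μ‖ = 1 := by
  rw [← pow_left_inj₀ (norm_nonneg μ) zero_le_one two_ne_zero, ← norm_pow, hμ, norm_inv, hlam,
    inv_one, one_pow]

lemma setOf_tomita_comp_eigen {H L : Submodule ℝ E} {S SL : E → E}
    (hS : IsTomitaOp H S) (hL : IsTomitaOp L SL) {lam μ : ℂ} (hμ1 : ‖μ‖ = 1)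
    (hμ : μ ^ 2 = lam⁻¹) :
    {v : E | (v ∈ cspan H ∧ S v ∈ cspan L) ∧ SL (S v) = lam • v}
      = (cspan (L.map (smulC E μ) ⊓ H) : Set E) := by
  have hμ0 : μ ≠ 0 := norm_ne_zero_iff.1 (by rw [hμ1]; exact one_ne_zero)
  have hlam0 : lam ≠ 0 := by rintro rfl; simp [hμ0] at hμ
  rw [← setOf_tomita_comp_fixed hS (hL.rotate hμ1), cspan_map_smulC L hμ0]
  ext v
  simp only [Set.mem_ofPred_eq, hμ]
  rw [inv_smul_eq_iff₀ hlam0, eq_comm]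

theorem stmt14_general {E : Type*} [NormedAddCommGroup E] [InnerProductSpace ℂ E]
    (H K : Submodule ℝ E)
    (hKH : K ≤ H)
    (S SK' SH' : E → E)
    (hS : ∀ h₁ ∈ H, ∀ h₂ ∈ H, S (h₁ + Complex.I • h₂) = h₁ - Complex.I • h₂)
    (hSK' : ∀ k₁ ∈ sympl K, ∀ k₂ ∈ sympl K,
        SK' (k₁ + Complex.I • k₂) = k₁ - Complex.I • k₂)
    (hSH' : ∀ x₁ ∈ sympl H, ∀ x₂ ∈ sympl H,
        SH' (x₁ + Complex.I • x₂) = x₁ - Complex.I • x₂)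
    (domT : Set E)
    (hdomT : domT = {v : E | v ∈ (cspan H : Submodule ℝ E) ∧
        S v ∈ (cspan (sympl K) : Submodule ℝ E)}) :
    (∀ v ∈ (cspan H : Submodule ℝ E), S v ∈ (cspan (sympl H) : Submodule ℝ E) →
        v ∈ domT ∧ SK' (S v) = SH' (S v)) ∧
    (∀ lam mu : ℂ, ‖lam‖ = 1 → mu ^ 2 = lam⁻¹ →
        {v : E | v ∈ domT ∧ SK' (S v) = lam • v}
          = ((cspan (sympl (K.map (smulC E mu)) ⊓ H) : Submodule ℝ E) : Set E)) ∧
    ({v : E | v ∈ domT ∧ SK' (S v) = v}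
        = ((cspan (sympl K ⊓ H) : Submodule ℝ E) : Set E)) ∧
    ({v : E | v ∈ domT ∧ SK' (S v) = -v}
        = ((cspan (realPerp K ⊓ H) : Submodule ℝ E) : Set E)) := by
  subst hdomT
  have hK' : IsTomitaOp (sympl K) SK' := hSK'
  refine ⟨fun v hv hSv => ?_, fun lam mu hlam hmu => ?_, ?_, ?_⟩
  · exact ⟨⟨hv, cspan_mono (sympl_anti hKH) hSv⟩,
      (hK'.mono (sympl_anti hKH)).eq_of_mem_cspan hSH' hSv⟩
  · have hmu1 := norm_eq_one_of_sq_eq_inv hlam hmu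
    rw [sympl_map_smulC K hmu1]
    exact setOf_tomita_comp_eigen hS hK' hmu1 hmu
  · simpa using setOf_tomita_comp_fixed hS hK'
  · have h := setOf_tomita_comp_eigen (lam := -1) hS hK' Complex.norm_I (by simp)
    rw [← sympl_map_smulC K (by simp), sympl_map_smulC_I] at h
    simpa using h

/-- `T = S_K* S_H = S_{K'} ∘ S_H` extends `Δ_H = S_{H'} ∘ S_H`, and for `|λ| = 1`
(with `μ² = λ⁻¹`) the eigenspace `ker (T − λ)` equals `ℂ[(μK)' ∩ H]`. In particular
`Fix T = ℂ[K' ∩ H]` and `Fix (−T) = ℂ[K^{⊥ᵣ} ∩ H]`. -/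
theorem stmt14 {E : Type*} [NormedAddCommGroup E] [InnerProductSpace ℂ E] [CompleteSpace E]
    (H K : Submodule ℝ E) (hH : IsStandardSubspace H) (hK : IsStandardSubspace K)
    (hKH : K ≤ H)
    (S SK' SH' : E → E)
    (hS : ∀ h₁ ∈ H, ∀ h₂ ∈ H, S (h₁ + Complex.I • h₂) = h₁ - Complex.I • h₂)
    (hSK' : ∀ k₁ ∈ sympl K, ∀ k₂ ∈ sympl K,
        SK' (k₁ + Complex.I • k₂) = k₁ - Complex.I • k₂)
    (hSH' : ∀ x₁ ∈ sympl H, ∀ x₂ ∈ sympl H,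
        SH' (x₁ + Complex.I • x₂) = x₁ - Complex.I • x₂)
    (domT : Set E)
    (hdomT : domT = {v : E | v ∈ (cspan H : Submodule ℝ E) ∧
        S v ∈ (cspan (sympl K) : Submodule ℝ E)}) :
    (∀ v ∈ (cspan H : Submodule ℝ E), S v ∈ (cspan (sympl H) : Submodule ℝ E) →
        v ∈ domT ∧ SK' (S v) = SH' (S v)) ∧
    (∀ lam mu : ℂ, ‖lam‖ = 1 → mu ^ 2 = lam⁻¹ →
        {v : E | v ∈ domT ∧ SK' (S v) = lam • v}
          = ((cspan (sympl (K.map (smulC E mu)) ⊓ H) : Submodule ℝ E) : Set E)) ∧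
    ({v : E | v ∈ domT ∧ SK' (S v) = v}
        = ((cspan (sympl K ⊓ H) : Submodule ℝ E) : Set E)) ∧
    ({v : E | v ∈ domT ∧ SK' (S v) = -v}
        = ((cspan (realPerp K ⊓ H) : Submodule ℝ E) : Set E)) :=
  stmt14_general H K hKH S SK' SH' hS hSK' hSH' domT hdomT
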